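/- Let ι be an index type, w : ι → ℝ with w ξ ≥ 1 for all ξ, satisfying the two-sided Weyl law with exponent Q > 0 (finite level sets, c₁·λ^Q ≤ N(λ) ≤ c₂·λ^Q for λ ≥ 1). Let q > 0, let m > −Q, and let σ : ι → ℝ satisfy a·(w ξ)^m ≤ σ ξ ≤ b·(w ξ)^m for all ξ, for some constants 0 < a ≤ b (positivity, L-ellipticity and the order-m symbol estimate). Then there exist constants c, C > 0 such that for all t ∈ (0,1]: c·t^{−(Q+m)/q} ≤ ∑'_ξ σ ξ · exp(−t·(w ξ)^q) ≤ C·t^{−(Q+m)/q}. (This is the two-sided heat-trace asymptotic Tr(A e^{−t𝓜_q}) ≍ t^{−(Q+m)/q} of the paper's theorem for self-adjoint L and positive L-elliptic symbols of order m > −Q.) -/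

import Mathlib

/-!
Put `λ = t ^ (-1/q)`, so that `t * λ ^ q = 1` and `t ^ (-(Q + m) / q) = λ ^ (Q + m)`; by the
symbol bounds it suffices to treat `σ = w ^ m`.

Lower bound: for a large constant `K` the Weyl law leaves at least `(c₁ / 2) λ ^ Q` indices in
the shell `λ / K < w ≤ λ`, and each of them contributes at least `K ^ (-|m|) λ ^ m e⁻¹`.

Upper bound: the dyadic shell `2 ^ k ≤ w < 2 ^ (k + 1)` holds `O(2 ^ (k Q))` indices, each
contributing `O(2 ^ (k m) exp (-t 2 ^ (k q)))`. Since `Q + m > 0`, the shells below `λ` form a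
geometric series of size `O(λ ^ (Q + m))`, and the shells above `λ` give `λ ^ (Q + m)` times the
convergent series `∑ j, 2 ^ (j (Q + m)) exp (-2 ^ (j q))`.
-/

open Real Finset
open scoped Nat

lemma summable_two_pow_rpow_mul_exp_neg (r : ℝ) {q : ℝ} (hq : 0 < q) :
    Summable fun j : ℕ => ((2:ℝ) ^ j) ^ r * exp (-((2:ℝ) ^ j) ^ q) := by
  -- with `q * n > r`, the bound `exp (-u) ≤ n! / u ^ n` makes the terms geometric
  obtain ⟨n, hn⟩ := exists_nat_gt (r / q)
  have hρ : (2:ℝ) ^ (r - q * n) < 1 :=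
    rpow_lt_one_of_one_lt_of_neg one_lt_two (by rw [div_lt_iff₀ hq] at hn; linarith)
  refine Summable.of_nonneg_of_le (fun j => by positivity) (fun j => ?_)
    ((summable_geometric_of_lt_one (by positivity) hρ).mul_left (n ! : ℝ))
  set u := ((2:ℝ) ^ j) ^ q
  have hu : 0 < u := by positivity
  have hexp : exp (-u) ≤ n ! / u ^ n := by
    rw [exp_neg, le_div_iff₀ (by positivity), inv_mul_le_iff₀ (exp_pos u)]
    simpa [div_le_iff₀ (by positivity : (0:ℝ) < n !), mul_comm] using
      pow_div_factorial_le_exp u hu.le n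
  have hgeom : ((2:ℝ) ^ (r - q * n)) ^ j = ((2:ℝ) ^ j) ^ r / u ^ n := by
    rw [rpow_sub two_pos, rpow_mul_natCast two_pos.le, div_pow, ← pow_mul, mul_comm n j, pow_mul,
      rpow_pow_comm two_pos.le, rpow_pow_comm two_pos.le]
  calc ((2:ℝ) ^ j) ^ r * exp (-u) ≤ ((2:ℝ) ^ j) ^ r * (n ! / u ^ n) := by gcongr
    _ = n ! * ((2:ℝ) ^ (r - q * n)) ^ j := by rw [hgeom]; ring

lemma sum_range_two_pow_rpow_le {r : ℝ} (hr : 0 < r) (n : ℕ) :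
    ∑ k ∈ range n, ((2:ℝ) ^ k) ^ r ≤ ((2:ℝ) ^ n) ^ r / (2 ^ r - 1) := by
  have hx : 1 < (2:ℝ) ^ r := one_lt_rpow one_lt_two hr
  simp_rw [← rpow_pow_comm zero_le_two, geom_sum_eq hx.ne']
  exact div_le_div_of_nonneg_right (by linarith) (by linarith)

lemma sum_range_dyadic_heat_tail_le (r : ℝ) {q t s : ℝ} (hq : 0 < q) (hs : 0 < s)
    (hts : 1 ≤ t * s ^ q) (M : ℕ) :
    ∑ j ∈ range M, (s * 2 ^ j) ^ r * exp (-t * (s * 2 ^ j) ^ q) ≤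
      s ^ r * ∑' j : ℕ, ((2:ℝ) ^ j) ^ r * exp (-((2:ℝ) ^ j) ^ q) := by
  rw [← (summable_two_pow_rpow_mul_exp_neg r hq).tsum_mul_left]
  refine (sum_le_sum fun j _ => ?_).trans <|
    ((summable_two_pow_rpow_mul_exp_neg r hq).mul_left _).sum_le_tsum _ fun j _ => by positivity
  have hdecay : -t * (s * 2 ^ j) ^ q ≤ -((2:ℝ) ^ j) ^ q := by
    rw [mul_rpow hs.le (by positivity), neg_mul, ← mul_assoc, neg_le_neg_iff]
    exact le_mul_of_one_le_left (by positivity) hts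
  rw [mul_rpow hs.le (by positivity), mul_assoc]
  gcongr

lemma exists_sum_range_dyadic_heat_le {r q : ℝ} (hr : 0 < r) (hq : 0 < q) :
    ∃ C, 0 < C ∧ ∀ t lam : ℝ, 0 ≤ t → 1 ≤ lam → 1 ≤ t * lam ^ q → ∀ M : ℕ,
      ∑ k ∈ range M, ((2:ℝ) ^ k) ^ r * exp (-t * ((2:ℝ) ^ k) ^ q) ≤ C * lam ^ r := by
  set A := ∑' j : ℕ, ((2:ℝ) ^ j) ^ r * exp (-((2:ℝ) ^ j) ^ q)
  have hA : 0 ≤ A := tsum_nonneg fun j => by positivity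
  have hx : 0 < (2:ℝ) ^ r - 1 := by linarith [one_lt_rpow one_lt_two hr]
  refine ⟨2 ^ r * ((2 ^ r - 1)⁻¹ + A), by positivity, fun t lam ht hlam htlam M => ?_⟩
  -- split the range at the dyadic scale `2 ^ (L + 1)` of `lam`
  obtain ⟨L, hLlam, hlamL⟩ := exists_nat_pow_near hlam one_lt_two
  set s : ℝ := 2 ^ (L + 1)
  have hs : 0 < s := by positivity
  have hsr : s ^ r ≤ 2 ^ r * lam ^ r := by
    rw [← mul_rpow zero_le_two (by linarith)]
    exact rpow_le_rpow hs.le (by simp only [s, pow_succ]; linarith) hr.le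
  have hhead : ∑ k ∈ range (L + 1), ((2:ℝ) ^ k) ^ r * exp (-t * ((2:ℝ) ^ k) ^ q) ≤
      s ^ r * (2 ^ r - 1)⁻¹ := by
    refine (sum_le_sum fun k _ => ?_).trans (sum_range_two_pow_rpow_le hr (L + 1))
    exact mul_le_of_le_one_right (by positivity) (exp_le_one_iff.2 (by
      have := mul_nonneg ht (rpow_nonneg (pow_nonneg zero_le_two k) q); linarith))
  have htail := sum_range_dyadic_heat_tail_le r hq hs (htlam.trans (by gcongr)) M
  calc ∑ k ∈ range M, ((2:ℝ) ^ k) ^ r * exp (-t * ((2:ℝ) ^ k) ^ q)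
      ≤ ∑ k ∈ range (L + 1 + M), ((2:ℝ) ^ k) ^ r * exp (-t * ((2:ℝ) ^ k) ^ q) :=
        sum_le_sum_of_subset_of_nonneg (range_subset_range.2 (by omega))
          fun k _ _ => by positivity
    _ = ∑ k ∈ range (L + 1), ((2:ℝ) ^ k) ^ r * exp (-t * ((2:ℝ) ^ k) ^ q) +
          ∑ j ∈ range M, (s * 2 ^ j) ^ r * exp (-t * (s * 2 ^ j) ^ q) := by
        simp only [sum_range_add, s, pow_add]
    _ ≤ s ^ r * ((2 ^ r - 1)⁻¹ + A) := by rw [mul_add]; exact add_le_add hhead htail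
    _ ≤ 2 ^ r * ((2 ^ r - 1)⁻¹ + A) * lam ^ r := by
        rw [mul_right_comm]; gcongr

lemma rpow_le_rpow_abs_mul_rpow {x s K : ℝ} (m : ℝ) (hx : 0 < x) (hxs : x ≤ s)
    (hsK : s ≤ K * x) :
    s ^ m ≤ K ^ |m| * x ^ m := by
  have hratio : 1 ≤ s / x := (one_le_div hx).2 hxs
  have hratioK : s / x ≤ K := (div_le_iff₀ hx).2 hsK
  calc s ^ m = (s / x) ^ m * x ^ m := by
        rw [← mul_rpow (by positivity) hx.le, div_mul_cancel₀ _ hx.ne']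
    _ ≤ K ^ |m| * x ^ m := by
      gcongr
      exact (rpow_le_rpow_of_exponent_le hratio (le_abs_self m)).trans
        (rpow_le_rpow (by positivity) hratioK (abs_nonneg m))

lemma rpow_neg_abs_mul_rpow_le {x s K : ℝ} (m : ℝ) (hs : 0 < s) (hsx : s ≤ x)
    (hxK : x ≤ K * s) :
    K ^ (-|m|) * x ^ m ≤ s ^ m := by
  have hx : 0 < x := hs.trans_le hsx
  have hK : 0 < K := by nlinarith
  have hratio : s / x ≤ 1 := (div_le_one hx).2 hsx
  have hratioK : K⁻¹ ≤ s / x := by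
    rw [le_div_iff₀ hx, inv_mul_le_iff₀ hK]; linarith
  calc K ^ (-|m|) * x ^ m ≤ (s / x) ^ m * x ^ m := by
        gcongr
        rw [rpow_neg hK.le, ← inv_rpow hK.le]
        exact (rpow_le_rpow (by positivity) hratioK (abs_nonneg m)).trans
          (rpow_le_rpow_of_exponent_ge (by positivity) hratio (le_abs_self m))
    _ = s ^ m := by rw [← mul_rpow (by positivity) hx.le, div_mul_cancel₀ _ hx.ne']

lemma exists_one_le_mul_rpow_eq_one {t q : ℝ} (ht : 0 < t) (ht1 : t ≤ 1) (hq : 0 < q)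
    (r : ℝ) :
    ∃ lam : ℝ, 1 ≤ lam ∧ t * lam ^ q = 1 ∧ t ^ (-(r / q)) = lam ^ r := by
  refine ⟨t⁻¹ ^ q⁻¹, one_le_rpow (one_le_inv₀ ht |>.2 ht1) (by positivity), ?_, ?_⟩
  · rw [rpow_inv_rpow (by positivity) hq.ne', mul_inv_cancel₀ ht.ne']
  · rw [← rpow_mul (by positivity), rpow_neg ht.le, inv_rpow ht.le, inv_mul_eq_div]

section WeylLaw

variable {ι : Type*} {w : ι → ℝ} {Q c₁ c₂ : ℝ}

lemma ncard_le_of_weyl_upper (hw : ∀ ξ, 1 ≤ w ξ) (hc₂ : 0 ≤ c₂)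
    (hN₂ : ∀ lam : ℝ, 1 ≤ lam → (Nat.card {ξ // w ξ ≤ lam} : ℝ) ≤ c₂ * lam ^ Q)
    {μ : ℝ} (hμ : 0 ≤ μ) : ({ξ | w ξ ≤ μ}.ncard : ℝ) ≤ c₂ * μ ^ Q := by
  rcases le_or_gt 1 μ with h1μ | hμ1
  · rw [← Nat.card_coe_set_eq]; exact hN₂ μ h1μ
  · have hempty : {ξ | w ξ ≤ μ} = ∅ :=
      Set.eq_empty_of_forall_notMem fun ξ hξ => by linarith [hw ξ, hξ.out]
    rw [hempty, Set.ncard_empty, Nat.cast_zero]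
    positivity

lemma exists_sum_le_dyadic_sum (hw : ∀ ξ, 1 ≤ w ξ)
    (hfin : ∀ lam : ℝ, 1 ≤ lam → {ξ | w ξ ≤ lam}.Finite)
    (hN₂ : ∀ lam : ℝ, 1 ≤ lam → (Nat.card {ξ // w ξ ≤ lam} : ℝ) ≤ c₂ * lam ^ Q)
    {f : ℝ → ℝ} {B : ℕ → ℝ} (hB : ∀ k, 0 ≤ B k)
    (hfB : ∀ (k : ℕ) (s : ℝ), 2 ^ k ≤ s → s ≤ 2 ^ (k + 1) → f s ≤ B k) (F : Finset ι) :
    ∃ M, ∑ ξ ∈ F, f (w ξ) ≤ c₂ * 2 ^ Q * ∑ k ∈ range M, ((2:ℝ) ^ k) ^ Q * B k := by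
  classical
  choose g hg using fun ξ => exists_nat_pow_near (hw ξ) one_lt_two
  refine ⟨F.sup g + 1, ?_⟩
  have hmaps : ∀ ξ ∈ F, g ξ ∈ range (F.sup g + 1) :=
    fun ξ hξ => mem_range.2 (Nat.lt_succ_of_le (le_sup hξ))
  rw [← sum_fiberwise_of_maps_to hmaps, mul_sum]
  refine sum_le_sum fun k _ => ?_
  have hcard : ((F.filter fun ξ => g ξ = k).card : ℝ) ≤ c₂ * 2 ^ Q * ((2:ℝ) ^ k) ^ Q := by
    have hsub : ↑(F.filter fun ξ => g ξ = k) ⊆ {ξ | w ξ ≤ 2 ^ (k + 1)} := fun ξ hξ => by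
      obtain ⟨-, rfl⟩ := mem_filter.1 hξ
      exact (hg ξ).2.le
    have hle := Set.ncard_le_ncard hsub (hfin _ (one_le_pow₀ one_le_two))
    rw [Set.ncard_coe_finset] at hle
    calc ((F.filter fun ξ => g ξ = k).card : ℝ) ≤ {ξ | w ξ ≤ (2:ℝ) ^ (k + 1)}.ncard := by
          exact_mod_cast hle
      _ ≤ c₂ * ((2:ℝ) ^ (k + 1)) ^ Q := by
          rw [← Nat.card_coe_set_eq]; exact hN₂ _ (one_le_pow₀ one_le_two)
      _ = c₂ * 2 ^ Q * ((2:ℝ) ^ k) ^ Q := by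
          rw [pow_succ, mul_rpow (by positivity) zero_le_two]; ring
  calc ∑ ξ ∈ F with g ξ = k, f (w ξ) ≤ (F.filter fun ξ => g ξ = k).card • B k :=
        sum_le_card_nsmul _ _ _ fun ξ hξ => by
          obtain ⟨-, rfl⟩ := mem_filter.1 hξ
          exact hfB _ _ (hg ξ).1 (hg ξ).2.le
    _ ≤ c₂ * 2 ^ Q * (((2:ℝ) ^ k) ^ Q * B k) := by
        rw [nsmul_eq_mul, ← mul_assoc]; gcongr; exact hB k

lemma exists_sum_rpow_mul_exp_le (hw : ∀ ξ, 1 ≤ w ξ)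
    (hfin : ∀ lam : ℝ, 1 ≤ lam → {ξ | w ξ ≤ lam}.Finite) (hc₂ : 0 < c₂)
    (hN₂ : ∀ lam : ℝ, 1 ≤ lam → (Nat.card {ξ // w ξ ≤ lam} : ℝ) ≤ c₂ * lam ^ Q)
    {q m : ℝ} (hq : 0 < q) (hQm : 0 < Q + m) :
    ∃ C, 0 < C ∧ ∀ t lam : ℝ, 0 ≤ t → 1 ≤ lam → 1 ≤ t * lam ^ q → ∀ F : Finset ι,
      ∑ ξ ∈ F, w ξ ^ m * exp (-t * w ξ ^ q) ≤ C * lam ^ (Q + m) := by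
  obtain ⟨C₀, hC₀, hdyadic⟩ := exists_sum_range_dyadic_heat_le hQm hq
  refine ⟨c₂ * 2 ^ Q * 2 ^ |m| * C₀, by positivity, fun t lam ht hlam htlam F => ?_⟩
  have hshell : ∀ (k : ℕ) (s : ℝ), 2 ^ k ≤ s → s ≤ 2 ^ (k + 1) →
      s ^ m * exp (-t * s ^ q) ≤ 2 ^ |m| * (((2:ℝ) ^ k) ^ m * exp (-t * ((2:ℝ) ^ k) ^ q)) := by
    intro k s hks hsk
    have hexp : exp (-t * s ^ q) ≤ exp (-t * ((2:ℝ) ^ k) ^ q) := exp_le_exp.2 <|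
      mul_le_mul_of_nonpos_left (rpow_le_rpow (by positivity) hks hq.le) (neg_nonpos.2 ht)
    rw [← mul_assoc]
    exact mul_le_mul (rpow_le_rpow_abs_mul_rpow m (by positivity) hks
      (by rwa [pow_succ, mul_comm] at hsk)) hexp (exp_pos _).le (by positivity)
  obtain ⟨M, hM⟩ := exists_sum_le_dyadic_sum hw hfin hN₂ (fun k => by positivity) hshell F
  refine hM.trans ?_
  have hsum : ∑ k ∈ range M,
        ((2:ℝ) ^ k) ^ Q * (2 ^ |m| * (((2:ℝ) ^ k) ^ m * exp (-t * ((2:ℝ) ^ k) ^ q))) =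
      2 ^ |m| * ∑ k ∈ range M, ((2:ℝ) ^ k) ^ (Q + m) * exp (-t * ((2:ℝ) ^ k) ^ q) := by
    rw [mul_sum]
    exact sum_congr rfl fun k _ => by rw [rpow_add (by positivity)]; ring
  rw [hsum, mul_assoc (c₂ * 2 ^ Q * 2 ^ |m|), ← mul_assoc (c₂ * 2 ^ Q)]
  gcongr
  exact hdyadic t lam ht hlam htlam M

lemma exists_le_ncard_shell (hw : ∀ ξ, 1 ≤ w ξ)
    (hfin : ∀ lam : ℝ, 1 ≤ lam → {ξ | w ξ ≤ lam}.Finite) (hQ : 0 < Q) (hc₁ : 0 < c₁)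
    (hc₂ : 0 ≤ c₂)
    (hN₁ : ∀ lam : ℝ, 1 ≤ lam → c₁ * lam ^ Q ≤ (Nat.card {ξ // w ξ ≤ lam} : ℝ))
    (hN₂ : ∀ lam : ℝ, 1 ≤ lam → (Nat.card {ξ // w ξ ≤ lam} : ℝ) ≤ c₂ * lam ^ Q) :
    ∃ K, 1 ≤ K ∧ ∀ lam : ℝ, 1 ≤ lam →
      c₁ / 2 * lam ^ Q ≤ ({ξ | w ξ ≤ lam} \ {ξ | w ξ ≤ lam / K}).ncard := by
  obtain ⟨K, hKc, hK⟩ := ((tendsto_rpow_atTop hQ).eventually_ge_atTop (2 * c₂ / c₁)).and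
    (Filter.eventually_ge_atTop 1) |>.exists
  refine ⟨K, hK, fun lam hlam => ?_⟩
  have hK0 : 0 < K := one_pos.trans_le hK
  have hsub : {ξ | w ξ ≤ lam / K} ⊆ {ξ | w ξ ≤ lam} := fun ξ hξ =>
    hξ.out.trans (div_le_self (by linarith) hK)
  have hinner : ({ξ | w ξ ≤ lam / K}.ncard : ℝ) ≤ c₁ / 2 * lam ^ Q :=
    calc ({ξ | w ξ ≤ lam / K}.ncard : ℝ) ≤ c₂ * (lam / K) ^ Q :=
          ncard_le_of_weyl_upper hw hc₂ hN₂ (by positivity)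
      _ = c₂ * lam ^ Q / K ^ Q := by rw [div_rpow (by linarith) hK0.le, mul_div_assoc]
      _ ≤ c₁ / 2 * lam ^ Q := by
          rw [div_le_iff₀ (by positivity)]
          rw [div_le_iff₀ hc₁] at hKc
          nlinarith [rpow_pos_of_pos (one_pos.trans_le hlam) Q]
  have houter : c₁ * lam ^ Q ≤ ({ξ | w ξ ≤ lam}.ncard : ℝ) := by
    rw [← Nat.card_coe_set_eq]; exact hN₁ lam hlam
  have hsplit : ({ξ | w ξ ≤ lam}.ncard : ℝ) ≤
      ({ξ | w ξ ≤ lam} \ {ξ | w ξ ≤ lam / K}).ncard + {ξ | w ξ ≤ lam / K}.ncard := by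
    exact_mod_cast Set.ncard_le_ncard_sdiff_add_ncard _ _ ((hfin lam hlam).subset hsub)
  linarith

lemma exists_le_sum_rpow_mul_exp (hw : ∀ ξ, 1 ≤ w ξ)
    (hfin : ∀ lam : ℝ, 1 ≤ lam → {ξ | w ξ ≤ lam}.Finite) (hQ : 0 < Q) (hc₁ : 0 < c₁)
    (hc₂ : 0 ≤ c₂)
    (hN₁ : ∀ lam : ℝ, 1 ≤ lam → c₁ * lam ^ Q ≤ (Nat.card {ξ // w ξ ≤ lam} : ℝ))
    (hN₂ : ∀ lam : ℝ, 1 ≤ lam → (Nat.card {ξ // w ξ ≤ lam} : ℝ) ≤ c₂ * lam ^ Q)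
    (m : ℝ) {q : ℝ} (hq : 0 < q) :
    ∃ c, 0 < c ∧ ∀ t lam : ℝ, 0 ≤ t → 1 ≤ lam → t * lam ^ q ≤ 1 → ∃ F : Finset ι,
      c * lam ^ (Q + m) ≤ ∑ ξ ∈ F, w ξ ^ m * exp (-t * w ξ ^ q) := by
  obtain ⟨K, hK, hshell⟩ := exists_le_ncard_shell hw hfin hQ hc₁ hc₂ hN₁ hN₂
  refine ⟨c₁ / 2 * (K ^ (-|m|) * exp (-1)), by positivity, fun t lam ht hlam htlam => ?_⟩
  have hlam0 : 0 < lam := one_pos.trans_le hlam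
  have hfinite : ({ξ | w ξ ≤ lam} \ {ξ | w ξ ≤ lam / K}).Finite :=
    (hfin lam hlam).subset Set.sdiff_subset
  refine ⟨hfinite.toFinset, ?_⟩
  have hterm : ∀ ξ ∈ hfinite.toFinset,
      K ^ (-|m|) * exp (-1) * lam ^ m ≤ w ξ ^ m * exp (-t * w ξ ^ q) := by
    intro ξ hξ
    obtain ⟨hξlam, hξK⟩ : w ξ ≤ lam ∧ ¬ w ξ ≤ lam / K := by simpa using hξ
    have hw0 : 0 < w ξ := one_pos.trans_le (hw ξ)
    have hpow : K ^ (-|m|) * lam ^ m ≤ w ξ ^ m := rpow_neg_abs_mul_rpow_le m hw0 hξlam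
      (by rw [not_le, div_lt_iff₀ (one_pos.trans_le hK)] at hξK; linarith)
    have hexp : exp (-1) ≤ exp (-t * w ξ ^ q) := by
      have := mul_le_mul_of_nonneg_left (rpow_le_rpow hw0.le hξlam hq.le) ht
      exact exp_le_exp.2 (by linarith)
    calc K ^ (-|m|) * exp (-1) * lam ^ m = K ^ (-|m|) * lam ^ m * exp (-1) := by ring
      _ ≤ w ξ ^ m * exp (-t * w ξ ^ q) := mul_le_mul hpow hexp (exp_pos _).le (by positivity)
  calc c₁ / 2 * (K ^ (-|m|) * exp (-1)) * lam ^ (Q + m)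
      = c₁ / 2 * lam ^ Q * (K ^ (-|m|) * exp (-1) * lam ^ m) := by rw [rpow_add hlam0]; ring
    _ ≤ hfinite.toFinset.card * (K ^ (-|m|) * exp (-1) * lam ^ m) := by
        rw [← Set.ncard_eq_toFinset_card _ hfinite]
        gcongr
        exact hshell lam hlam
    _ ≤ ∑ ξ ∈ hfinite.toFinset, w ξ ^ m * exp (-t * w ξ ^ q) := by
        rw [← nsmul_eq_mul]; exact card_nsmul_le_sum _ _ _ hterm

end WeylLaw

theorem heat_trace_two_sided_asymp_order_m
    {ι : Type*} (w : ι → ℝ) (hw : ∀ ξ, 1 ≤ w ξ)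
    (hfin : ∀ lam : ℝ, 1 ≤ lam → {ξ | w ξ ≤ lam}.Finite)
    (Q : ℝ) (hQ : 0 < Q) (c₁ c₂ : ℝ) (hc₁ : 0 < c₁) (hc₂ : 0 < c₂)
    (hN : ∀ lam : ℝ, ∀ _ : 1 ≤ lam,
      c₁ * lam ^ Q ≤ (Nat.card {ξ // w ξ ≤ lam} : ℝ) ∧
      (Nat.card {ξ // w ξ ≤ lam} : ℝ) ≤ c₂ * lam ^ Q)
    (q : ℝ) (hq : 0 < q) (m : ℝ) (hm : -Q < m)
    (σ : ι → ℝ) (a b : ℝ) (ha : 0 < a) (hab : a ≤ b)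
    (hσ : ∀ ξ, a * (w ξ) ^ m ≤ σ ξ ∧ σ ξ ≤ b * (w ξ) ^ m) :
    ∃ c C : ℝ, 0 < c ∧ 0 < C ∧ ∀ t : ℝ, 0 < t → t ≤ 1 →
      c * t ^ (-((Q + m) / q)) ≤ (∑' ξ, σ ξ * Real.exp (-t * (w ξ) ^ q)) ∧
      (∑' ξ, σ ξ * Real.exp (-t * (w ξ) ^ q)) ≤ C * t ^ (-((Q + m) / q)) := by
  have hN₁ := fun lam h => (hN lam h).1
  have hN₂ := fun lam h => (hN lam h).2
  obtain ⟨c, hc, hlower⟩ := exists_le_sum_rpow_mul_exp hw hfin hQ hc₁ hc₂.le hN₁ hN₂ m hq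
  obtain ⟨C, hC, hupper⟩ :=
    exists_sum_rpow_mul_exp_le hw hfin hc₂ hN₂ hq (by linarith : 0 < Q + m)
  have hb : 0 < b := ha.trans_le hab
  refine ⟨a * c, b * C, by positivity, by positivity, fun t ht ht1 => ?_⟩
  obtain ⟨lam, hlam, htlam, hscale⟩ := exists_one_le_mul_rpow_eq_one ht ht1 hq (Q + m)
  have hterm : ∀ ξ, 0 ≤ σ ξ * exp (-t * w ξ ^ q) := fun ξ =>
    mul_nonneg ((mul_nonneg ha.le (rpow_nonneg (zero_le_one.trans (hw ξ)) m)).trans (hσ ξ).1)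
      (exp_pos _).le
  have hpartial : ∀ F : Finset ι,
      ∑ ξ ∈ F, σ ξ * exp (-t * w ξ ^ q) ≤ b * C * lam ^ (Q + m) := fun F =>
    calc ∑ ξ ∈ F, σ ξ * exp (-t * w ξ ^ q) ≤ ∑ ξ ∈ F, b * (w ξ ^ m * exp (-t * w ξ ^ q)) :=
          sum_le_sum fun ξ _ => by
            rw [← mul_assoc]; exact mul_le_mul_of_nonneg_right (hσ ξ).2 (exp_pos _).le
      _ ≤ b * C * lam ^ (Q + m) := by
          rw [← mul_sum, mul_assoc]
          exact mul_le_mul_of_nonneg_left (hupper t lam ht.le hlam htlam.ge F) hb.le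
  rw [hscale]
  refine ⟨?_, Real.tsum_le_of_sum_le hterm hpartial⟩
  obtain ⟨F, hF⟩ := hlower t lam ht.le hlam htlam.le
  calc a * c * lam ^ (Q + m) ≤ ∑ ξ ∈ F, a * (w ξ ^ m * exp (-t * w ξ ^ q)) := by
        rw [← mul_sum, mul_assoc]; exact mul_le_mul_of_nonneg_left hF ha.le
    _ ≤ ∑ ξ ∈ F, σ ξ * exp (-t * w ξ ^ q) := sum_le_sum fun ξ _ => by
        rw [← mul_assoc]; exact mul_le_mul_of_nonneg_right (hσ ξ).1 (exp_pos _).le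
    _ ≤ ∑' ξ, σ ξ * exp (-t * w ξ ^ q) :=
        (summable_of_sum_le hterm hpartial).sum_le_tsum F fun ξ _ => hterm ξ
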